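/- arXiv:1501.06213 — 2 statements merged into one kernel-verified Lean document; each statement's English description precedes it below -/
import Mathlib

section
/- There exists a constant C_α > 0, depending only on α, such that for every n ∈ ℕ, every k ∈ ℕ, all λ₁, …, λ_k ≥ 0, and every polynomial P ∈ P_n, ‖P'‖_{W^{k,2}([0,∞); w,λ₁w,…,λ_kw)} ≤ C_α · n · ‖P‖_{W^{k,2}([0,∞); w,λ₁w,…,λ_kw)}, where w(x) = x^α e^{−x} on [0,∞) and α > −1. -/
open MeasureTheory Polynomial

/-!
Write `⟨R⟩_β = ∫₀^∞ R(x) x^β e^{-x} dx`. On monomials this is `Γ(k + β + 1)`, so multiplication by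
`x` shifts `β` by one and integration by parts is the recurrence `Γ(s + 1) = s Γ(s)`. Integrating by
parts, `⟨P' Q'⟩_{β+1} = ⟨(L P) Q⟩_β` for the Laguerre operator `L P = x P' - x P'' - (β + 1) P'`,
whose monic eigenpolynomial of degree `m` has eigenvalue `m`. These eigenpolynomials are
`⟨·⟩_β`-orthogonal, and expanding `P` in them gives `⟨P'²⟩_{β+1} ≤ n ⟨P²⟩_β` for `deg P ≤ n`.
Conversely, expanding `0 ≤ ⟨(t u + x u')²⟩_α` with `t = (α + 1)/2` and using the previous bound at
`β = α + 1` gives `⟨u²⟩_α ≤ (2/(α+1) + 4n/(α+1)²) ⟨u²⟩_{α+1}`. For `u = P'` the two bounds combine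
to `‖P'‖ ≤ C n ‖P‖` in `L²(x^α e^{-x})`, and the Sobolev norm follows term by term because every
derivative of `P` again has degree at most `n`.
-/

/-- The weighted L² norm of a polynomial `P` over a set `A ⊆ ℝ` with weight `w`:
`‖P‖_{L²(A,w)} = (∫_A |P(x)|² w(x) dx)^{1/2}`. -/
noncomputable def L2w (A : Set ℝ) (w : ℝ → ℝ) (P : Polynomial ℝ) : ℝ :=
  Real.sqrt (∫ x in A, (P.eval x) ^ 2 * w x)

/-- The weighted Sobolev norm
`‖P‖_{W^{k,2}(A; w, λ₁w, …, λ_k w)} = (‖P‖²_{L²(A,w)} + ∑_{j=1}^k λ_j ‖P^{(j)}‖²_{L²(A,w)})^{1/2}`. -/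
noncomputable def sobNorm (A : Set ℝ) (w : ℝ → ℝ) (k : ℕ) (lam : ℕ → ℝ)
    (P : Polynomial ℝ) : ℝ :=
  Real.sqrt ((L2w A w P) ^ 2 +
    ∑ j ∈ Finset.Icc 1 k, lam j * (L2w A w (derivative^[j] P)) ^ 2)

open Set

lemma sobNorm_derivative_le {A : Set ℝ} {w : ℝ → ℝ} {k : ℕ} {lam : ℕ → ℝ}
    (hlam : ∀ j ∈ Finset.Icc 1 k, 0 ≤ lam j) {c : ℝ} (hc : 0 ≤ c) {P : ℝ[X]}
    (h : ∀ j, L2w A w (derivative^[j + 1] P) ≤ c * L2w A w (derivative^[j] P)) :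
    sobNorm A w k lam (derivative P) ≤ c * sobNorm A w k lam P := by
  have hsq : ∀ j, L2w A w (derivative^[j + 1] P) ^ 2 ≤ c ^ 2 * L2w A w (derivative^[j] P) ^ 2 :=
    fun j ↦ by rw [← mul_pow]; exact pow_le_pow_left₀ (Real.sqrt_nonneg _) (h j) 2
  rw [sobNorm, sobNorm, ← Real.sqrt_sq hc, ← Real.sqrt_mul (sq_nonneg c), mul_add, Finset.mul_sum]
  refine Real.sqrt_le_sqrt (add_le_add (hsq 0) (Finset.sum_le_sum fun j hj ↦ ?_))
  rw [← Function.iterate_succ_apply, mul_left_comm]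
  exact mul_le_mul_of_nonneg_left (hsq j) (hlam j hj)

theorem LinearMap.IsOrthoᵢ.apply_sum_smul_sum_smul {R M ι : Type*} [CommSemiring R]
    [AddCommMonoid M] [Module R M] {B : LinearMap.BilinForm R M} {q : ι → M} (hq : B.IsOrthoᵢ q)
    (s : Finset ι) (c : ι → R) :
    B (∑ i ∈ s, c i • q i) (∑ i ∈ s, c i • q i) = ∑ i ∈ s, c i * c i * B (q i) (q i) := by
  classical
  simp only [map_sum, map_smul, LinearMap.sum_apply, LinearMap.smul_apply, smul_eq_mul]
  refine Finset.sum_congr rfl fun i hi ↦ ?_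
  rw [Finset.sum_eq_single i (fun j _ hji ↦ by rw [hq hji, mul_zero])
    (fun h ↦ absurd hi h)]
  ring

section

variable {α β : ℝ}

/-- The functional `R ↦ ∫₀^∞ R(x) x^β e^{-x} dx`, defined through its moments `Γ(k + β + 1)` so
that it is linear and total in `β`; `setIntegral_eval_mul_rpow_mul_exp_neg` identifies it with
the integral for `β > -1`. -/
noncomputable def gammaMoment (β : ℝ) : ℝ[X] →ₗ[ℝ] ℝ :=
  Polynomial.lsum fun k ↦ Real.Gamma (k + β + 1) • LinearMap.id

@[simp]
lemma gammaMoment_monomial (k : ℕ) (a : ℝ) :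
    gammaMoment β (monomial k a) = Real.Gamma (k + β + 1) * a := by
  simp [gammaMoment]

lemma gammaMoment_X_mul (R : ℝ[X]) : gammaMoment β (X * R) = gammaMoment (β + 1) R := by
  induction R using Polynomial.induction_on' with
  | add P Q hP hQ => rw [mul_add, map_add, map_add, hP, hQ]
  | monomial k a =>
    rw [X_mul_monomial, gammaMoment_monomial, gammaMoment_monomial]
    push_cast
    ring_nf

/-- Integration by parts against `x ^ (β + 1) * exp (-x)`. -/
lemma gammaMoment_X_mul_derivative (hβ : -1 < β) (R : ℝ[X]) :
    gammaMoment β (X * derivative R) = gammaMoment (β + 1) R - (β + 1) * gammaMoment β R := by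
  induction R using Polynomial.induction_on' with
  | add P Q hP hQ => rw [derivative_add, mul_add, map_add, map_add, map_add, hP, hQ]; ring
  | monomial k a =>
    have hk : (k : ℝ) + β + 1 ≠ 0 := by have := k.cast_nonneg (α := ℝ); linarith
    have hΓ : Real.Gamma (k + (β + 1) + 1) = (k + β + 1) * Real.Gamma (k + β + 1) := by
      rw [← Real.Gamma_add_one hk]; ring_nf
    have hXD : X * derivative (monomial k a) = monomial k (a * k) := by
      rcases k with _ | k <;> simp [X_mul_monomial]
    rw [hXD, gammaMoment_monomial, gammaMoment_monomial, gammaMoment_monomial, hΓ]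
    ring

lemma eval_monomial_mul_rpow_mul_exp_neg (k : ℕ) (a : ℝ) {x : ℝ} (hx : x ∈ Ioi 0) :
    (monomial k a).eval x * (x ^ β * Real.exp (-x))
      = a * (Real.exp (-x) * x ^ ((k + β + 1) - 1)) := by
  rw [eval_monomial, show (k : ℝ) + β + 1 - 1 = k + β by ring, Real.rpow_add hx,
    Real.rpow_natCast]
  ring

lemma integrableOn_eval_mul_rpow_mul_exp_neg (hβ : -1 < β) (R : ℝ[X]) :
    IntegrableOn (fun x ↦ R.eval x * (x ^ β * Real.exp (-x))) (Ioi 0) := by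
  induction R using Polynomial.induction_on' with
  | add P Q hP hQ =>
    simp only [eval_add, add_mul]
    exact hP.add hQ
  | monomial k a =>
    have hs : (0 : ℝ) < k + β + 1 := by have := k.cast_nonneg (α := ℝ); linarith
    exact IntegrableOn.congr_fun ((Real.GammaIntegral_convergent hs).const_mul a)
      (fun x hx ↦ (eval_monomial_mul_rpow_mul_exp_neg k a hx).symm) measurableSet_Ioi

lemma setIntegral_eval_mul_rpow_mul_exp_neg (hβ : -1 < β) (R : ℝ[X]) :
    ∫ x in Ioi 0, R.eval x * (x ^ β * Real.exp (-x)) = gammaMoment β R := by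
  induction R using Polynomial.induction_on' with
  | add P Q hP hQ =>
    simp only [eval_add, add_mul]
    rw [integral_add (integrableOn_eval_mul_rpow_mul_exp_neg hβ P)
      (integrableOn_eval_mul_rpow_mul_exp_neg hβ Q), hP, hQ, map_add]
  | monomial k a =>
    have hs : (0 : ℝ) < k + β + 1 := by have := k.cast_nonneg (α := ℝ); linarith
    rw [setIntegral_congr_fun measurableSet_Ioi
        (fun x hx ↦ eval_monomial_mul_rpow_mul_exp_neg k a hx), integral_const_mul,
      ← Real.Gamma_eq_integral hs, gammaMoment_monomial, mul_comm]

lemma gammaMoment_mul_self_nonneg (hβ : -1 < β) (R : ℝ[X]) : 0 ≤ gammaMoment β (R * R) := by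
  rw [← setIntegral_eval_mul_rpow_mul_exp_neg hβ]
  refine setIntegral_nonneg measurableSet_Ioi fun x hx ↦ ?_
  rw [eval_mul]
  exact mul_nonneg (mul_self_nonneg _) (mul_nonneg (Real.rpow_nonneg hx.le β) (Real.exp_pos _).le)

lemma gammaMoment_C_mul (a : ℝ) (R : ℝ[X]) : gammaMoment β (C a * R) = a * gammaMoment β R := by
  rw [C_mul', map_smul, smul_eq_mul]

noncomputable def laguerreOp (β : ℝ) (P : ℝ[X]) : ℝ[X] :=
  X * derivative P - X * derivative (derivative P) - C (β + 1) * derivative P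

lemma gammaMoment_succ_derivative_mul_derivative (hβ : -1 < β) (P Q : ℝ[X]) :
    gammaMoment (β + 1) (derivative P * derivative Q) = gammaMoment β (laguerreOp β P * Q) := by
  have hP'Q : X * (derivative P * derivative Q)
      = X * derivative (derivative P * Q) - X * (derivative (derivative P) * Q) := by
    rw [derivative_mul]; ring
  have hLQ : laguerreOp β P * Q = X * (derivative P * Q) - X * (derivative (derivative P) * Q)
      - C (β + 1) * (derivative P * Q) := by
    rw [laguerreOp]; ring
  rw [← gammaMoment_X_mul, hP'Q, hLQ, map_sub, map_sub, map_sub, gammaMoment_C_mul,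
    gammaMoment_X_mul_derivative hβ]
  simp only [gammaMoment_X_mul]
  ring

lemma coeff_laguerreOp (P : ℝ[X]) (k : ℕ) :
    (laguerreOp β P).coeff k = k * P.coeff k - (k + 1) * (k + β + 1) * P.coeff (k + 1) := by
  rw [laguerreOp]
  rcases k with _ | k
  · simp [coeff_derivative]
  · simp only [coeff_sub, coeff_X_mul, coeff_C_mul, coeff_derivative]
    push_cast
    ring

/-- `laguerreCoeff β m j` is the coefficient of `X ^ (m - j)` in `monicLaguerre β m`. -/
noncomputable def laguerreCoeff (β : ℝ) (m : ℕ) : ℕ → ℝ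
  | 0 => 1
  | j + 1 => -((m - j) * (m - j + β) / (j + 1)) * laguerreCoeff β m j

noncomputable def monicLaguerre (β : ℝ) (m : ℕ) : ℝ[X] :=
  ∑ k ∈ Finset.range (m + 1), C (laguerreCoeff β m (m - k)) * X ^ k

lemma coeff_monicLaguerre (m k : ℕ) :
    (monicLaguerre β m).coeff k = if k ≤ m then laguerreCoeff β m (m - k) else 0 := by
  simp [monicLaguerre]

lemma laguerreOp_monicLaguerre (m : ℕ) :
    laguerreOp β (monicLaguerre β m) = C (m : ℝ) * monicLaguerre β m := by
  ext k
  rw [coeff_laguerreOp, coeff_C_mul, coeff_monicLaguerre, coeff_monicLaguerre]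
  rcases lt_trichotomy k m with hk | rfl | hk
  · obtain ⟨j, rfl⟩ := Nat.exists_eq_add_of_lt hk
    rw [if_pos (by omega), if_pos (by omega), show k + j + 1 - k = j + 1 by omega,
      show k + j + 1 - (k + 1) = j by omega, laguerreCoeff]
    push_cast
    field_simp
    ring
  · simp [laguerreCoeff]
  · rw [if_neg (by omega), if_neg (by omega)]
    ring

lemma coeff_monicLaguerre_self (m : ℕ) : (monicLaguerre β m).coeff m = 1 := by
  simp [coeff_monicLaguerre, laguerreCoeff]

noncomputable def laguerreSequence (β : ℝ) : Polynomial.Sequence ℝ where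
  elems' := monicLaguerre β
  degree_eq' m := by
    refine degree_eq_of_le_of_coeff_ne_zero ((degree_le_iff_coeff_zero _ _).mpr fun k hk ↦ ?_)
      (by simp [coeff_monicLaguerre_self])
    rw [coeff_monicLaguerre, if_neg (by exact_mod_cast hk.not_ge)]

lemma exists_eq_sum_smul_monicLaguerre {n : ℕ} {P : ℝ[X]} (hP : P.natDegree ≤ n) :
    ∃ c : ℕ → ℝ, ∑ m ∈ Finset.Iic n, c m • monicLaguerre β m = P := by
  have hspan := (laguerreSequence β).span_degreeLE (m := n) fun m _ ↦ by
    rw [leadingCoeff, Sequence.natDegree_eq]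
    change IsUnit ((monicLaguerre β m).coeff m)
    rw [coeff_monicLaguerre_self]
    exact isUnit_one
  rw [← Submodule.mem_span_image_finset_iff_exists_fun', Finset.coe_Iic]
  exact hspan ▸ mem_degreeLE.mpr (degree_le_of_natDegree_le hP)

noncomputable def gammaForm (β : ℝ) : LinearMap.BilinForm ℝ ℝ[X] :=
  (LinearMap.mul ℝ ℝ[X]).compr₂ (gammaMoment β)

@[simp]
lemma gammaForm_apply (P Q : ℝ[X]) : gammaForm β P Q = gammaMoment β (P * Q) := rfl

lemma gammaMoment_succ_derivative_monicLaguerre_mul_derivative (hβ : -1 < β) (m : ℕ) (Q : ℝ[X]) :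
    gammaMoment (β + 1) (derivative (monicLaguerre β m) * derivative Q)
      = m * gammaMoment β (monicLaguerre β m * Q) := by
  rw [gammaMoment_succ_derivative_mul_derivative hβ, laguerreOp_monicLaguerre, mul_assoc,
    gammaMoment_C_mul]

lemma isOrthoᵢ_gammaForm_monicLaguerre (hβ : -1 < β) :
    (gammaForm β).IsOrthoᵢ (monicLaguerre β) := by
  intro m l hml
  have hm := gammaMoment_succ_derivative_monicLaguerre_mul_derivative hβ m (monicLaguerre β l)
  have hl := gammaMoment_succ_derivative_monicLaguerre_mul_derivative hβ l (monicLaguerre β m)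
  rw [mul_comm (derivative _), mul_comm (monicLaguerre β l)] at hl
  have hml' : (m : ℝ) - l ≠ 0 := sub_ne_zero.mpr (by exact_mod_cast hml)
  have h : ((m : ℝ) - l) * gammaMoment β (monicLaguerre β m * monicLaguerre β l) = 0 := by
    linear_combination hl - hm
  exact (mul_eq_zero.mp h).resolve_left hml'

lemma isOrthoᵢ_gammaForm_succ_derivative_monicLaguerre (hβ : -1 < β) :
    ((gammaForm (β + 1)).compl₁₂ derivative derivative).IsOrthoᵢ (monicLaguerre β) := by
  intro m l hml
  change gammaMoment (β + 1) (derivative (monicLaguerre β m) * derivative (monicLaguerre β l)) = 0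
  rw [gammaMoment_succ_derivative_monicLaguerre_mul_derivative hβ]
  exact mul_eq_zero_of_right _ (isOrthoᵢ_gammaForm_monicLaguerre hβ hml)

lemma gammaMoment_succ_derivative_mul_self_le (hβ : -1 < β) {n : ℕ} {P : ℝ[X]}
    (hP : P.natDegree ≤ n) :
    gammaMoment (β + 1) (derivative P * derivative P) ≤ n * gammaMoment β (P * P) := by
  obtain ⟨c, rfl⟩ := exists_eq_sum_smul_monicLaguerre (β := β) hP
  have hA := (isOrthoᵢ_gammaForm_monicLaguerre hβ).apply_sum_smul_sum_smul (Finset.Iic n) c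
  have hB := (isOrthoᵢ_gammaForm_succ_derivative_monicLaguerre hβ).apply_sum_smul_sum_smul
    (Finset.Iic n) c
  simp only [gammaForm_apply, LinearMap.compl₁₂_apply] at hA hB
  rw [hA, hB, Finset.mul_sum]
  refine Finset.sum_le_sum fun m hm ↦ ?_
  rw [gammaMoment_succ_derivative_monicLaguerre_mul_derivative hβ]
  have hmn : (m : ℝ) ≤ n := by exact_mod_cast Finset.mem_Iic.mp hm
  have hq := gammaMoment_mul_self_nonneg hβ (monicLaguerre β m)
  calc c m * c m * (m * gammaMoment β (monicLaguerre β m * monicLaguerre β m))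
      = m * (c m * c m * gammaMoment β (monicLaguerre β m * monicLaguerre β m)) := by ring
    _ ≤ n * (c m * c m * gammaMoment β (monicLaguerre β m * monicLaguerre β m)) := by
      gcongr
      exact mul_nonneg (mul_self_nonneg _) hq

lemma gammaMoment_mul_self_le_succ (hα : -1 < α) {n : ℕ} {u : ℝ[X]} (hu : u.natDegree ≤ n) :
    gammaMoment α (u * u) ≤ (2 / (α + 1) + 4 * n / (α + 1) ^ 2) * gammaMoment (α + 1) (u * u) := by
  have ha : 0 < α + 1 := by linarith
  -- `0 ≤ ∫ (t u + x u')² x^α e^{-x}` at `t = (α + 1) / 2`, cross term integrated by parts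
  have hsq := gammaMoment_mul_self_nonneg hα (C ((α + 1) / 2) * u + X * derivative u)
  have hexpand : (C ((α + 1) / 2) * u + X * derivative u) * (C ((α + 1) / 2) * u + X * derivative u)
      = C ((α + 1) / 2) * (C ((α + 1) / 2) * (u * u)) + C ((α + 1) / 2) * (X * derivative (u * u))
        + X * (X * (derivative u * derivative u)) := by
    rw [derivative_mul]; ring
  rw [hexpand] at hsq
  simp only [map_add, gammaMoment_C_mul, gammaMoment_X_mul_derivative hα, gammaMoment_X_mul] at hsq
  have hE := gammaMoment_succ_derivative_mul_self_le (β := α + 1) (by linarith) hu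
  have key : (α + 1) ^ 2 * gammaMoment α (u * u)
      ≤ (α + 1) ^ 2 * ((2 / (α + 1) + 4 * n / (α + 1) ^ 2) * gammaMoment (α + 1) (u * u)) := by
    rw [show (α + 1) ^ 2 * ((2 / (α + 1) + 4 * n / (α + 1) ^ 2) * gammaMoment (α + 1) (u * u))
      = 2 * (α + 1) * gammaMoment (α + 1) (u * u) + 4 * n * gammaMoment (α + 1) (u * u) by
        field_simp]
    linear_combination 4 * hsq + 4 * hE
  exact le_of_mul_le_mul_left key (by positivity)

lemma gammaMoment_derivative_mul_self_le (hα : -1 < α) {n : ℕ} {P : ℝ[X]}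
    (hP : P.natDegree ≤ n) :
    gammaMoment α (derivative P * derivative P)
      ≤ (2 / (α + 1) + 4 / (α + 1) ^ 2) * n ^ 2 * gammaMoment α (P * P) := by
  have ha : 0 < α + 1 := by linarith
  have hP' : (derivative P).natDegree ≤ n :=
    (natDegree_derivative_le P).trans ((Nat.sub_le _ _).trans hP)
  set G := gammaMoment α (P * P)
  have hG : 0 ≤ G := gammaMoment_mul_self_nonneg hα P
  have hn : (n : ℝ) ≤ n ^ 2 := by exact_mod_cast Nat.le_self_pow two_ne_zero n
  calc gammaMoment α (derivative P * derivative P)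
      ≤ (2 / (α + 1) + 4 * n / (α + 1) ^ 2) * gammaMoment (α + 1) (derivative P * derivative P) :=
        gammaMoment_mul_self_le_succ hα hP'
    _ ≤ (2 / (α + 1) + 4 * n / (α + 1) ^ 2) * (n * G) := by
        gcongr
        exact gammaMoment_succ_derivative_mul_self_le hα hP
    _ = 2 / (α + 1) * n * G + 4 / (α + 1) ^ 2 * n ^ 2 * G := by ring
    _ ≤ 2 / (α + 1) * n ^ 2 * G + 4 / (α + 1) ^ 2 * n ^ 2 * G := by gcongr
    _ = (2 / (α + 1) + 4 / (α + 1) ^ 2) * n ^ 2 * G := by ring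

lemma L2w_rpow_mul_exp_neg (hα : -1 < α) (Q : ℝ[X]) :
    L2w (Ici 0) (fun x ↦ x ^ α * Real.exp (-x)) Q = √(gammaMoment α (Q * Q)) := by
  rw [L2w, integral_Ici_eq_integral_Ioi, ← setIntegral_eval_mul_rpow_mul_exp_neg hα]
  simp only [eval_mul, sq]

lemma L2w_rpow_mul_exp_neg_derivative_le (hα : -1 < α) {n : ℕ} {P : ℝ[X]} (hP : P.natDegree ≤ n) :
    L2w (Ici 0) (fun x ↦ x ^ α * Real.exp (-x)) (derivative P)
      ≤ √(2 / (α + 1) + 4 / (α + 1) ^ 2) * n * L2w (Ici 0) (fun x ↦ x ^ α * Real.exp (-x)) P := by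
  have ha : 0 < α + 1 := by linarith
  rw [L2w_rpow_mul_exp_neg hα, L2w_rpow_mul_exp_neg hα, ← Real.sqrt_sq (Nat.cast_nonneg n),
    ← Real.sqrt_mul (by positivity), ← Real.sqrt_mul (by positivity)]
  exact Real.sqrt_le_sqrt (gammaMoment_derivative_mul_self_le hα hP)

end

/-- Markov-type inequality in the Laguerre–Sobolev case: `w(x) = x^α e^{-x}` on `[0,∞)`, `α > -1`. -/
theorem laguerre_sobolev_markov (α : ℝ) (hα : -1 < α) :
    ∃ C : ℝ, 0 < C ∧ ∀ (n k : ℕ) (lam : ℕ → ℝ), (∀ j ∈ Finset.Icc 1 k, 0 ≤ lam j) →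
      ∀ P : Polynomial ℝ, P.natDegree ≤ n →
        sobNorm (Set.Ici 0) (fun x => x ^ α * Real.exp (-x)) k lam (derivative P) ≤
          C * n * sobNorm (Set.Ici 0) (fun x => x ^ α * Real.exp (-x)) k lam P := by
  have ha : 0 < α + 1 := by linarith
  refine ⟨√(2 / (α + 1) + 4 / (α + 1) ^ 2), by positivity, fun n k lam hlam P hP ↦ ?_⟩
  refine sobNorm_derivative_le hlam (by positivity) fun j ↦ ?_
  rw [Function.iterate_succ_apply']
  exact L2w_rpow_mul_exp_neg_derivative_le hα
    ((natDegree_iterate_derivative P j).trans (Nat.sub_le _ _) |>.trans hP)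
end

section
/- Let −∞ ≤ a < b ≤ ∞, and let w be an integrable function on (a,b) with w > 0 a.e. on (a,b) such that all moments r_n := ∫_a^b xⁿ w(x) dx (n ≥ 0) are finite. Let (p_ν)_{ν≥0} be the sequence of orthonormal polynomials with respect to w, i.e., p_ν has degree ν with positive leading coefficient and ∫_a^b p_ν(x) p_μ(x) w(x) dx = δ_{νμ}. Then for every n ∈ ℕ with n ≥ 1 and every polynomial P ∈ P_n, ‖P'‖_{L²((a,b),w)} ≤ ( Σ_{ν=1}^{n} ν · ‖p_ν'‖²_{L²((a,b),w)} )^{1/2} · ‖P‖_{L²((a,b),w)}. -/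
open MeasureTheory Polynomial

/-! Expanding `P = ∑_{ν ≤ n} c_ν p_ν` in the orthonormal basis gives `‖P‖² = ∑ c_ν²`, while
the triangle and Cauchy–Schwarz inequalities give `‖P'‖ ≤ ∑ |c_ν| ‖p_ν'‖ ≤ ‖P‖ (∑ ‖p_ν'‖²)^{1/2}`:
the norm of differentiation on `P_n` is at most its Hilbert–Schmidt norm. Since `p_0' = 0` and
`ν ≥ 1` otherwise, `∑_{ν ≤ n} ‖p_ν'‖² ≤ ∑_{ν=1}^n ν ‖p_ν'‖²`. -/

namespace LinearMap.BilinForm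

variable {M N ι : Type*} [AddCommGroup M] [Module ℝ M] [AddCommGroup N] [Module ℝ N]
  (B : LinearMap.BilinForm ℝ M)

lemma abs_apply_le_sqrt_mul_sqrt (hs : ∀ x, 0 ≤ B x x) (hB : LinearMap.IsSymm B) (x y : M) :
    |B x y| ≤ √(B x x) * √(B y y) := by
  rw [← Real.sqrt_mul (hs x)]
  exact Real.abs_le_sqrt (B.apply_sq_le_of_symm hs hB x y)

lemma apply_sum_smul_self_le (hs : ∀ x, 0 ≤ B x x) (hB : LinearMap.IsSymm B)
    (s : Finset ι) (c : ι → ℝ) (v : ι → M) :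
    B (∑ i ∈ s, c i • v i) (∑ i ∈ s, c i • v i) ≤ (∑ i ∈ s, |c i| * √(B (v i) (v i))) ^ 2 := by
  rw [sq, Finset.sum_mul_sum]
  simp only [map_sum, map_smul, LinearMap.sum_apply, LinearMap.smul_apply, smul_eq_mul,
    Finset.mul_sum]
  refine Finset.sum_le_sum fun i _ => Finset.sum_le_sum fun j _ => ?_
  calc c i * (c j * B (v j) (v i)) ≤ |c i| * (|c j| * |B (v j) (v i)|) := by
        rw [← abs_mul, ← abs_mul]; exact le_abs_self _
    _ ≤ |c i| * (|c j| * (√(B (v j) (v j)) * √(B (v i) (v i)))) := by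
        gcongr; exact B.abs_apply_le_sqrt_mul_sqrt hs hB _ _
    _ = _ := by ring

lemma apply_sum_smul_sum_smul_of_orthonormal [DecidableEq ι] {e : ι → M}
    (he : ∀ i j, B (e i) (e j) = if i = j then 1 else 0) (s : Finset ι) (c : ι → ℝ) :
    B (∑ i ∈ s, c i • e i) (∑ i ∈ s, c i • e i) = ∑ i ∈ s, c i ^ 2 := by
  simp only [map_sum, map_smul, LinearMap.sum_apply, LinearMap.smul_apply, smul_eq_mul, he,
    mul_ite, mul_one, mul_zero, sq]
  exact Finset.sum_congr rfl fun i hi => by simp [hi]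

theorem apply_map_self_le_of_orthonormal [DecidableEq ι] {B' : LinearMap.BilinForm ℝ N}
    (hs : ∀ y, 0 ≤ B' y y) (hB' : LinearMap.IsSymm B') (D : M →ₗ[ℝ] N) {e : ι → M}
    (he : ∀ i j, B (e i) (e j) = if i = j then 1 else 0) (s : Finset ι) (c : ι → ℝ) :
    B' (D (∑ i ∈ s, c i • e i)) (D (∑ i ∈ s, c i • e i)) ≤
      (∑ i ∈ s, B' (D (e i)) (D (e i))) * B (∑ i ∈ s, c i • e i) (∑ i ∈ s, c i • e i) := by
  have hD : D (∑ i ∈ s, c i • e i) = ∑ i ∈ s, c i • D (e i) := by simp only [map_sum, map_smul]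
  rw [B.apply_sum_smul_sum_smul_of_orthonormal he, mul_comm, hD]
  calc _ ≤ (∑ i ∈ s, |c i| * √(B' (D (e i)) (D (e i)))) ^ 2 :=
        B'.apply_sum_smul_self_le hs hB' s c _
    _ ≤ (∑ i ∈ s, |c i| ^ 2) * ∑ i ∈ s, √(B' (D (e i)) (D (e i))) ^ 2 :=
        Finset.sum_mul_sq_le_sq_mul_sq s _ _
    _ = _ := by simp only [sq_abs, Real.sq_sqrt (hs _)]

end LinearMap.BilinForm

lemma Polynomial.Sequence.exists_eq_sum_smul_of_natDegree_le {K : Type*} [Field K]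
    (S : Polynomial.Sequence K) {n : ℕ} {P : K[X]} (hP : P.natDegree ≤ n) :
    ∃ c : ℕ → K, P = ∑ ν ∈ Finset.Iic n, c ν • S ν := by
  have hmem : P ∈ Submodule.span K (S '' ↑(Finset.Iic n)) := by
    rw [Finset.coe_Iic, S.span_degreeLE fun i _ => (leadingCoeff_ne_zero.mpr (S.ne_zero i)).isUnit,
      mem_degreeLE]
    exact natDegree_le_iff_degree_le.mp hP
  obtain ⟨c, hc⟩ := (Submodule.mem_span_image_finset_iff_exists_fun' K).mp hmem
  exact ⟨c, hc.symm⟩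

lemma Finset.sum_Iic_le_sum_Icc_one_natCast_mul {d : ℕ → ℝ} (hd : ∀ ν, 0 ≤ d ν) (hd0 : d 0 = 0)
    (n : ℕ) : ∑ ν ∈ Finset.Iic n, d ν ≤ ∑ ν ∈ Finset.Icc 1 n, (ν : ℝ) * d ν := by
  have hIic : Finset.Iic n = insert 0 (Finset.Icc 1 n) := by ext; simp; omega
  rw [hIic, Finset.sum_insert (by simp), hd0, zero_add]
  exact Finset.sum_le_sum fun ν hν =>
    le_mul_of_one_le_left (hd ν) (by exact_mod_cast (Finset.mem_Icc.mp hν).1)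

section WeightedForm

variable {A : Set ℝ} {w : ℝ → ℝ}

lemma integrableOn_eval_mul (hmoments : ∀ n : ℕ, IntegrableOn (fun x => x ^ n * w x) A)
    (Q : ℝ[X]) : IntegrableOn (fun x => Q.eval x * w x) A := by
  simp only [eval_eq_sum_range, Finset.sum_mul, mul_assoc]
  exact integrable_finsetSum _ fun i _ => (hmoments i).const_mul _

lemma integrableOn_eval_mul_eval_mul
    (hmoments : ∀ n : ℕ, IntegrableOn (fun x => x ^ n * w x) A) (Q R : ℝ[X]) :
    IntegrableOn (fun x => Q.eval x * R.eval x * w x) A := by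
  simpa using integrableOn_eval_mul hmoments (Q * R)

variable (hmoments : ∀ n : ℕ, IntegrableOn (fun x => x ^ n * w x) A)

noncomputable def weightedForm : LinearMap.BilinForm ℝ ℝ[X] :=
  LinearMap.mk₂ ℝ (fun Q R => ∫ x in A, Q.eval x * R.eval x * w x)
    (fun Q₁ Q₂ R => by
      simp only [eval_add, add_mul]
      exact integral_add (integrableOn_eval_mul_eval_mul hmoments Q₁ R)
        (integrableOn_eval_mul_eval_mul hmoments Q₂ R))
    (fun c Q R => by simp only [eval_smul, smul_eq_mul, mul_assoc, integral_const_mul])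
    (fun Q R₁ R₂ => by
      simp only [eval_add, mul_add, add_mul]
      exact integral_add (integrableOn_eval_mul_eval_mul hmoments Q R₁)
        (integrableOn_eval_mul_eval_mul hmoments Q R₂))
    (fun c Q R => by
      simp only [eval_smul, smul_eq_mul, mul_left_comm _ c, mul_assoc, integral_const_mul])

lemma weightedForm_apply (Q R : ℝ[X]) :
    weightedForm hmoments Q R = ∫ x in A, Q.eval x * R.eval x * w x := rfl

lemma weightedForm_isSymm : LinearMap.IsSymm (weightedForm hmoments) :=
  ⟨fun Q R => by simp only [weightedForm_apply, RingHom.id_apply, mul_comm (Q.eval _)]⟩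

lemma weightedForm_self_nonneg (hw : ∀ᵐ x ∂(volume.restrict A), 0 ≤ w x) (Q : ℝ[X]) :
    0 ≤ weightedForm hmoments Q Q := by
  refine integral_nonneg_of_ae ?_
  filter_upwards [hw] with x hx
  exact mul_nonneg (mul_self_nonneg _) hx

lemma L2w_eq_sqrt_weightedForm (Q : ℝ[X]) : L2w A w Q = √(weightedForm hmoments Q Q) := by
  simp only [L2w, weightedForm_apply, sq]

end WeightedForm

theorem mirsky_bound_general (w : ℝ → ℝ)
    (A : Set ℝ)
    (hw_pos : ∀ᵐ x ∂(volume.restrict A), 0 < w x)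
    (hmoments : ∀ n : ℕ, IntegrableOn (fun x => x ^ n * w x) A)
    (p : ℕ → Polynomial ℝ)
    (hdeg : ∀ ν, (p ν).natDegree = ν)
    (horth : ∀ ν μ, ∫ x in A, (p ν).eval x * (p μ).eval x * w x
      = if ν = μ then 1 else 0)
    (n : ℕ) (P : Polynomial ℝ) (hP : P.natDegree ≤ n) :
    L2w A w (derivative P) ≤
      Real.sqrt (∑ ν ∈ Finset.Icc 1 n, (ν : ℝ) * (L2w A w (derivative (p ν))) ^ 2) *
        L2w A w P := by
  set B := weightedForm hmoments with hB_def
  have hB : ∀ Q, 0 ≤ B Q Q := weightedForm_self_nonneg hmoments (hw_pos.mono fun _ h => h.le)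
  have hp : ∀ ν, p ν ≠ 0 := fun ν h => by simpa [h] using horth ν ν
  let S : Polynomial.Sequence ℝ := ⟨p, fun ν => (degree_eq_iff_natDegree_eq (hp ν)).mpr (hdeg ν)⟩
  obtain ⟨c, hc⟩ := S.exists_eq_sum_smul_of_natDegree_le hP
  have hHS : B (derivative P) (derivative P) ≤
      (∑ ν ∈ Finset.Iic n, B (derivative (p ν)) (derivative (p ν))) * B P P := by
    rw [hc]
    exact B.apply_map_self_le_of_orthonormal hB (weightedForm_isSymm hmoments) derivative
      horth _ c
  have hHS_sum_le := Finset.sum_Iic_le_sum_Icc_one_natCast_mul (fun ν => hB (derivative (p ν)))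
    (by simp only [derivative_of_natDegree_zero (hdeg 0), map_zero]) n
  simp only [L2w_eq_sqrt_weightedForm hmoments, ← hB_def, Real.sq_sqrt, hB]
  rw [← Real.sqrt_mul (Finset.sum_nonneg fun ν _ => mul_nonneg ν.cast_nonneg (hB _))]
  exact Real.sqrt_le_sqrt (hHS.trans (mul_le_mul_of_nonneg_right hHS_sum_le (hB P)))

/-- Mirsky's bound: if `w` is an integrable weight on `(a,b)` (with `-∞ ≤ a < b ≤ ∞`),
positive a.e., with all moments finite, and `(p_ν)` are the orthonormal polynomials with
respect to `w`, then for every `n ≥ 1` and every polynomial `P` of degree at most `n`,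
`‖P'‖_{L²((a,b),w)} ≤ (∑_{ν=1}^n ν ‖p_ν'‖²_{L²((a,b),w)})^{1/2} ‖P‖_{L²((a,b),w)}`. -/
theorem mirsky_bound (a b : EReal) (hab : a < b) (w : ℝ → ℝ)
    (A : Set ℝ) (hA : A = {x : ℝ | a < (x : EReal) ∧ (x : EReal) < b})
    (hw_int : IntegrableOn w A)
    (hw_pos : ∀ᵐ x ∂(volume.restrict A), 0 < w x)
    (hmoments : ∀ n : ℕ, IntegrableOn (fun x => x ^ n * w x) A)
    (p : ℕ → Polynomial ℝ)
    (hdeg : ∀ ν, (p ν).natDegree = ν)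
    (hlead : ∀ ν, 0 < (p ν).leadingCoeff)
    (horth : ∀ ν μ, ∫ x in A, (p ν).eval x * (p μ).eval x * w x
      = if ν = μ then 1 else 0)
    (n : ℕ) (hn : 1 ≤ n) (P : Polynomial ℝ) (hP : P.natDegree ≤ n) :
    L2w A w (derivative P) ≤
      Real.sqrt (∑ ν ∈ Finset.Icc 1 n, (ν : ℝ) * (L2w A w (derivative (p ν))) ^ 2) *
        L2w A w P :=
  mirsky_bound_general w A hw_pos hmoments p hdeg horth n P hP
end
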